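/- arXiv:2001.02872 — 2 statements merged into one kernel-verified Lean document; each statement's English description precedes it below -/
import Mathlib

section
/- Under cardinality-monotonicity, for every fitness value v with v_ge < v < v_max, the quantity p^+_{v,δ} = ct_{v+δ} / (ct_{v+δ} + ct_{v−δ}) is monotonically non-increasing in δ for 1 ≤ δ ≤ v_max − v_ge, where p^+_{v,δ} is taken to be 0 when ct_{v+δ} + ct_{v−δ} = 0 or v + δ > v_max. -/
/-- `p⁺_{v,δ}`: conditional probability of improvement at fitness distance `δ`,
taken to be 0 when the denominator vanishes or `v + δ > vmax`. -/
noncomputable def pplus (ct : ℤ → ℕ) (vmax v δ : ℤ) : ℝ :=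
  if v + δ > vmax ∨ ct (v + δ) + ct (v - δ) = 0 then 0
  else (ct (v + δ) : ℝ) / ((ct (v + δ) : ℝ) + (ct (v - δ) : ℝ))

theorem pplus_antitone_of_card_monotonic
    (ct : ℤ → ℕ) (vmax vmode vge : ℤ)
    (hmaxpos : 0 < ct vmax)
    (hzero : ∀ w : ℤ, vmax < w → ct w = 0)
    (hmodele : vmode ≤ vmax)
    (hCM : ∀ v v' : ℤ, vmode ≤ v → v ≤ v' → ct v' ≤ ct v)
    (hge : ∀ v δ : ℤ, vge < v → δ < vmax - v → vmode < v - δ) :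
    ∀ v δ δ' : ℤ, vge < v → v < vmax →
      1 ≤ δ → δ ≤ δ' → δ' ≤ vmax - vge →
      pplus ct vmax v δ' ≤ pplus ct vmax v δ := by
  intro v δ δ' hv hvmax h1 hδδ' _
  have hnn : 0 ≤ pplus ct vmax v δ := by
    unfold pplus
    split
    · exact le_refl 0
    · positivity
  by_cases hz : v + δ' > vmax ∨ ct (v + δ') + ct (v - δ') = 0
  · rw [pplus, if_pos hz]; exact hnn
  push_neg at hz
  obtain ⟨hle', hne'⟩ := hz
  have hmode : vmode ≤ v - δ' := by
    have := hge v (δ' - 1) hv (by linarith)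
    linarith
  have hb : ct (v - δ) ≤ ct (v - δ') := hCM _ _ hmode (by linarith)
  have ha : ct (v + δ') ≤ ct (v + δ) := hCM _ _ (by linarith) (by linarith)
  by_cases ha' : ct (v + δ') = 0
  · rw [pplus, if_neg (by push_neg; exact ⟨hle', hne'⟩), ha']
    simpa using hnn
  have hapos : 0 < ct (v + δ) := lt_of_lt_of_le (Nat.pos_of_ne_zero ha') ha
  have hzd : ¬ (v + δ > vmax ∨ ct (v + δ) + ct (v - δ) = 0) := by
    push_neg
    exact ⟨by linarith, by omega⟩
  rw [pplus, pplus, if_neg (by push_neg; exact ⟨hle', hne'⟩), if_neg hzd]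
  have hd1 : (0:ℝ) < (ct (v + δ') : ℝ) + (ct (v - δ') : ℝ) := by
    have : 0 < ct (v + δ') + ct (v - δ') := Nat.pos_of_ne_zero hne'
    exact_mod_cast this
  have hd2 : (0:ℝ) < (ct (v + δ) : ℝ) + (ct (v - δ) : ℝ) := by
    have : 0 < ct (v + δ) + ct (v - δ) := by omega
    exact_mod_cast this
  rw [div_le_div_iff₀ hd1 hd2]
  have haR : (ct (v + δ') : ℝ) ≤ (ct (v + δ) : ℝ) := by exact_mod_cast ha
  have hbR : (ct (v - δ) : ℝ) ≤ (ct (v - δ') : ℝ) := by exact_mod_cast hb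
  have h0 : (0:ℝ) ≤ (ct (v + δ') : ℝ) := by positivity
  have h0b : (0:ℝ) ≤ (ct (v - δ) : ℝ) := by positivity
  nlinarith
end

section
/- Theorem (NSF + cardinality-monotonicity implies effective neighbourhood search): Suppose for each fitness value v with v_ge < v < v_max the following hold: (a) unskewedness: pn^+_v = ∑_{δ∈Δ} pn_{v,δ}·p^+_{v,δ} and p^+_v = ∑_{δ∈Δ} p_{v,δ}·p^+_{v,δ}; (b) NSF: δ ↦ pn_{v,δ} − p_{v,δ} is monotonically non-increasing on Δ, pn_{v,1} > p_{v,1}, and ∑_{δ∈Δ}(pn_{v,δ} − p_{v,δ}) ≥ 0; (c) cardinality-monotonicity, implying δ ↦ p^+_{v,δ} is monotonically non-increasing on Δ with p^+_{v,δ} > 0 for δ ≤ v_max − v. Then pn^+_v > p^+_v, i.e., a random neighbour of a solution with fitness v is strictly more likely to improve on v than a uniformly random solution. -/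
/-!
Write `D δ = pn_{v,δ} - p_{v,δ}` and `S_k = ∑_{δ ≤ k} D δ`. Since `D` is non-increasing with
`D 1 > 0` and non-negative total, every proper partial sum `S_k` is strictly positive: if `D` is
still non-negative at `k + 1` the first `k` terms are non-negative with a positive first term,
and otherwise all remaining terms are negative, so `S_k` exceeds the total. Summation by parts
writes `pn⁺_v - p⁺_v = ∑ D δ p⁺_{v,δ}` as `∑ S_k (p⁺_{v,k} - p⁺_{v,k+1})`, a sum of non-negative
terms, and the term at `k = v_max - v`, where `p⁺_{v,·}` drops from a positive value to `0`, is
strictly positive.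
-/

open Finset

theorem sum_range_mul_eq_mul_add_sum_partialSum_mul_sub {R : Type*} [CommRing R]
    (D Q : ℕ → R) (n : ℕ) :
    ∑ i ∈ range n, D i * Q i =
      (∑ i ∈ range n, D i) * Q n +
        ∑ k ∈ range n, (∑ i ∈ range (k + 1), D i) * (Q k - Q (k + 1)) := by
  induction n with
  | zero => simp
  | succ n ih =>
    rw [sum_range_succ, ih,
      sum_range_succ (fun k => (∑ i ∈ range (k + 1), D i) * (Q k - Q (k + 1))), sum_range_succ D n]
    ring

theorem sum_range_pos_of_antitoneOn {D : ℕ → ℝ} {n k : ℕ} (hD : AntitoneOn D (Set.Iio n))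
    (hD0 : 0 < D 0) (hsum : 0 ≤ ∑ i ∈ range n, D i) (hk : 0 < k) (hkn : k < n) :
    0 < ∑ i ∈ range k, D i := by
  by_cases hDk : 0 ≤ D k
  · refine sum_pos' (fun i hi => hDk.trans ?_) ⟨0, mem_range.2 hk, hD0⟩
    have hik := mem_range.1 hi
    exact hD (hik.trans hkn) hkn hik.le
  · have htail : ∑ i ∈ Ico k n, D i < 0 := by
      refine sum_neg (fun i hi => ?_) (nonempty_Ico.2 hkn)
      obtain ⟨hki, hin⟩ := mem_Ico.1 hi
      exact (hD hkn hin hki).trans_lt (not_le.1 hDk)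
    linarith [sum_range_add_sum_Ico D hkn.le]

theorem sum_range_mul_pos_of_antitone {D Q : ℕ → ℝ} {n : ℕ} (hD : AntitoneOn D (Set.Iio n))
    (hD0 : 0 < D 0) (hsum : 0 ≤ ∑ i ∈ range n, D i) (hQ : Antitone Q) (hQn : Q n = 0)
    (hdrop : ∃ k, k + 1 < n ∧ Q (k + 1) < Q k) :
    0 < ∑ i ∈ range n, D i * Q i := by
  rw [sum_range_mul_eq_mul_add_sum_partialSum_mul_sub, hQn, mul_zero, zero_add]
  refine sum_pos' (fun k hk => mul_nonneg ?_ (sub_nonneg.2 (hQ k.le_succ))) ?_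
  · rcases (show k + 1 ≤ n from mem_range.1 hk).lt_or_eq with hkn | hkn
    · exact (sum_range_pos_of_antitoneOn hD hD0 hsum k.succ_pos hkn).le
    · rwa [hkn]
  · obtain ⟨k, hkn, hQk⟩ := hdrop
    exact ⟨k, mem_range.2 (k.lt_succ_self.trans hkn),
      mul_pos (sum_range_pos_of_antitoneOn hD hD0 hsum k.succ_pos hkn) (sub_pos.2 hQk)⟩

theorem sum_Icc_one_eq_sum_range {M : Type*} [AddCommMonoid M] (f : ℤ → M) (b : ℤ) :
    ∑ δ ∈ Icc 1 b, f δ = ∑ i ∈ range b.toNat, f (1 + i) := by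
  rw [Int.Icc_eq_finset_map, sum_map, add_sub_cancel_right]
  rfl

theorem antitoneOn_Ici_of_antitoneOn_Icc {α : Type*} [Preorder α] [Zero α] {q : ℤ → α}
    {c M : ℤ} (hcM : c < M) (hmono : AntitoneOn q (Set.Icc 1 M))
    (hpos : ∀ δ, 1 ≤ δ → δ ≤ c → 0 < q δ) (hzero : ∀ δ, c < δ → q δ = 0) :
    AntitoneOn q (Set.Ici 1) := by
  intro a ha b hb hab
  by_cases hbM : b ≤ M
  · exact hmono ⟨ha, hab.trans hbM⟩ ⟨hb, hbM⟩ hab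
  · rw [hzero b (by omega)]
    by_cases hac : a ≤ c
    · exact (hpos a ha hac).le
    · exact (hzero a (by omega)).ge

theorem nsf_card_monotonic_implies_effective_general
    (vmax vge : ℤ) (pn p q : ℤ → ℤ → ℝ) (pnplus pplus : ℤ → ℝ)
    (v : ℤ) (hv₁ : vge < v) (hv₂ : v < vmax)
    -- (a) unskewedness
    (hpnplus : pnplus v = ∑ δ ∈ Finset.Icc 1 (vmax - vge), pn v δ * q v δ)
    (hpplus : pplus v = ∑ δ ∈ Finset.Icc 1 (vmax - vge), p v δ * q v δ)
    -- (b) NSF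
    (hmono : ∀ δ ∈ Finset.Icc 1 (vmax - vge), ∀ δ' ∈ Finset.Icc 1 (vmax - vge),
      δ ≤ δ' → pn v δ' - p v δ' ≤ pn v δ - p v δ)
    (hstrict : p v 1 < pn v 1)
    (hsum : 0 ≤ ∑ δ ∈ Finset.Icc 1 (vmax - vge), (pn v δ - p v δ))
    -- (c) consequences of cardinality-monotonicity
    (hqmono : ∀ δ ∈ Finset.Icc 1 (vmax - vge), ∀ δ' ∈ Finset.Icc 1 (vmax - vge),
      δ ≤ δ' → q v δ' ≤ q v δ)
    (hqpos : ∀ δ : ℤ, 1 ≤ δ → δ ≤ vmax - v → 0 < q v δ)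
    (hqzero : ∀ δ : ℤ, vmax - v < δ → q v δ = 0) :
    pplus v < pnplus v := by
  have hq : AntitoneOn (q v) (Set.Ici 1) :=
    antitoneOn_Ici_of_antitoneOn_Icc (M := vmax - vge) (by omega)
      (fun a ha b hb => hqmono a (mem_Icc.2 ha) b (mem_Icc.2 hb)) hqpos hqzero
  rw [sum_Icc_one_eq_sum_range] at hsum
  rw [← sub_pos, hpnplus, hpplus, ← sum_sub_distrib, sum_Icc_one_eq_sum_range]
  simp_rw [← sub_mul]
  refine sum_range_mul_pos_of_antitone (fun i (hi : i < _) j (hj : j < _) hij => ?_)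
    (by simpa using hstrict) hsum (fun i j hij => ?_) (hqzero _ (by omega))
    ⟨(vmax - v).toNat - 1, by omega, ?_⟩
  · exact hmono _ (mem_Icc.2 ⟨by omega, by omega⟩) _ (mem_Icc.2 ⟨by omega, by omega⟩) (by omega)
  · exact hq (Set.mem_Ici.2 (by omega)) (Set.mem_Ici.2 (by omega)) (by omega)
  · rw [hqzero _ (by omega)]
    exact hqpos _ (by omega) (by omega)

/-- Theorem 1: NSF + cardinality-monotonicity implies neighbourhood search is
effective at every fitness `v` with `v_ge < v < v_max`. Here `pn v δ` and `p v δ`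
are the proportions of neighbours (resp. of all solutions) at fitness distance `δ`
from `v`, and `q v δ = p⁺_{v,δ}` is the conditional probability of improvement. -/
theorem nsf_card_monotonic_implies_effective
    (vmax vge : ℤ) (pn p q : ℤ → ℤ → ℝ) (pnplus pplus : ℤ → ℝ)
    (v : ℤ) (hv₁ : vge < v) (hv₂ : v < vmax)
    -- (a) unskewedness
    (hpnplus : pnplus v = ∑ δ ∈ Finset.Icc 1 (vmax - vge), pn v δ * q v δ)
    (hpplus : pplus v = ∑ δ ∈ Finset.Icc 1 (vmax - vge), p v δ * q v δ)
    -- nonnegativity of proportions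
    (hpn0 : ∀ δ ∈ Finset.Icc 1 (vmax - vge), 0 ≤ pn v δ)
    (hp0 : ∀ δ ∈ Finset.Icc 1 (vmax - vge), 0 ≤ p v δ)
    -- (b) NSF
    (hmono : ∀ δ ∈ Finset.Icc 1 (vmax - vge), ∀ δ' ∈ Finset.Icc 1 (vmax - vge),
      δ ≤ δ' → pn v δ' - p v δ' ≤ pn v δ - p v δ)
    (hstrict : p v 1 < pn v 1)
    (hsum : 0 ≤ ∑ δ ∈ Finset.Icc 1 (vmax - vge), (pn v δ - p v δ))
    -- (c) consequences of cardinality-monotonicity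
    (hqmono : ∀ δ ∈ Finset.Icc 1 (vmax - vge), ∀ δ' ∈ Finset.Icc 1 (vmax - vge),
      δ ≤ δ' → q v δ' ≤ q v δ)
    (hqpos : ∀ δ : ℤ, 1 ≤ δ → δ ≤ vmax - v → 0 < q v δ)
    (hqzero : ∀ δ : ℤ, vmax - v < δ → q v δ = 0) :
    pplus v < pnplus v :=
  nsf_card_monotonic_implies_effective_general vmax vge pn p q pnplus pplus v hv₁ hv₂ hpnplus hpplus
    hmono hstrict hsum hqmono hqpos hqzero
end
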